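/- arXiv:2512.20878 — 2 statements merged into one kernel-verified Lean document; each statement's English description precedes it below -/
import Mathlib

section
/- The total chromatic number of the circulant graph C_7(1,3) equals 6. -/
/-- The circulant graph `C_n(1,3)`: vertices are `ZMod n`, and `i` is adjacent to `j`
iff `i - j ≡ ±1` or `±3 (mod n)`. -/
def circulantGraph (n : ℕ) : SimpleGraph (ZMod n) :=
  SimpleGraph.fromRel (fun i j => j - i = 1 ∨ j - i = 3)

/-- `vc` (on vertices) and `ec` (on edges) form a total `k`-colouring of `G`:
adjacent vertices get distinct colours, adjacent (distinct, incident) edges get distinct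
colours, and each vertex gets a colour distinct from those of its incident edges. -/
def IsTotalColoring {V : Type*} (G : SimpleGraph V) (k : ℕ)
    (vc : V → Fin k) (ec : Sym2 V → Fin k) : Prop :=
  (∀ v w : V, G.Adj v w → vc v ≠ vc w) ∧
  (∀ e₁ ∈ G.edgeSet, ∀ e₂ ∈ G.edgeSet, e₁ ≠ e₂ → (∃ v, v ∈ e₁ ∧ v ∈ e₂) → ec e₁ ≠ ec e₂) ∧
  (∀ v : V, ∀ e ∈ G.edgeSet, v ∈ e → vc v ≠ ec e)

/-- `G` has a total `k`-colouring. -/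
def HasTotalColoring {V : Type*} (G : SimpleGraph V) (k : ℕ) : Prop :=
  ∃ vc ec, IsTotalColoring G k vc ec

/-- The total chromatic number of `G`: the least `k` admitting a total `k`-colouring. -/
noncomputable def totalChromaticNumber {V : Type*} (G : SimpleGraph V) : ℕ :=
  sInf {k : ℕ | HasTotalColoring G k}

/-!
Each colour class of a total colouring is an independent set `A` of vertices together with a
matching `B` avoiding `A`, so `|A| + 2|B| ≤ n` and hence `|A| + |B| ≤ (α + n) / 2`, where `α` is
the independence number. In `C_7(1,3)` we have `α = 2`, so a colour class covers at most `4` of the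
`7 + 14 = 21` vertices and edges, and at least `6` colours are needed; an explicit total
`6`-colouring shows that `6` suffice.
-/

open Finset

instance (n : ℕ) : DecidableRel (circulantGraph n).Adj :=
  inferInstanceAs (DecidableRel (SimpleGraph.fromRel _).Adj)

theorem totalChromaticNumber_eq_of {V : Type*} {G : SimpleGraph V} {k : ℕ}
    (hk : HasTotalColoring G k) (hle : ∀ m, HasTotalColoring G m → k ≤ m) :
    totalChromaticNumber G = k :=
  le_antisymm (Nat.sInf_le hk) (hle _ (Nat.sInf_mem (s := {m | HasTotalColoring G m}) ⟨k, hk⟩))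

theorem Sym2.sum_card_filter_mem_eq_two_mul_card {V : Type*} [Fintype V] [DecidableEq V]
    {B : Finset (Sym2 V)} (hB : ∀ e ∈ B, ¬ e.IsDiag) :
    ∑ v, #{e ∈ B | v ∈ e} = 2 * #B := by
  calc ∑ v, #{e ∈ B | v ∈ e} = ∑ e ∈ B, #{v | v ∈ e} := by
        simp only [card_filter]; exact sum_comm
    _ = ∑ e ∈ B, 2 := sum_congr rfl fun e he => by
        rw [← Sym2.card_toFinset_of_not_isDiag e (hB e he)]
        congr 1; ext; simp
    _ = 2 * #B := by rw [sum_const, smul_eq_mul, mul_comm]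

namespace IsTotalColoring

variable {V : Type*} [Fintype V] {G : SimpleGraph V}
  {k : ℕ} {vc : V → Fin k} {ec : Sym2 V → Fin k}

theorem isIndepSet_vertexClass (h : IsTotalColoring G k vc ec) (c : Fin k) :
    G.IsIndepSet ({v | vc v = c} : Finset V) := by
  intro v hv w hw _ hadj
  simp only [coe_filter, mem_univ, true_and, Set.mem_ofPred_eq] at hv hw
  exact h.1 v w hadj (hv.trans hw.symm)

theorem card_vertexClass_add_two_mul_card_edgeClass_le [DecidableEq V] [DecidableRel G.Adj]
    (h : IsTotalColoring G k vc ec) (c : Fin k) :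
    #{v | vc v = c} + 2 * #{e ∈ G.edgeFinset | ec e = c} ≤ Fintype.card V := by
  set B := {e ∈ G.edgeFinset | ec e = c}
  have hB : ∀ e ∈ B, e ∈ G.edgeSet ∧ ec e = c := by
    intro e he; simpa [B] using he
  have hlocal : ∀ v, (if vc v = c then 1 else 0) + #{e ∈ B | v ∈ e} ≤ 1 := by
    intro v
    split_ifs with hvc
    · suffices {e ∈ B | v ∈ e} = ∅ by simp [this]
      refine filter_eq_empty_iff.2 fun e he hve => ?_
      exact h.2.2 v e (hB e he).1 hve (hvc.trans (hB e he).2.symm)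
    · refine (zero_add _).trans_le (card_le_one.2 fun e₁ h₁ e₂ h₂ => ?_)
      rw [mem_filter] at h₁ h₂
      by_contra hne
      exact h.2.1 e₁ (hB e₁ h₁.1).1 e₂ (hB e₂ h₂.1).1 hne ⟨v, h₁.2, h₂.2⟩
        ((hB e₁ h₁.1).2.trans (hB e₂ h₂.1).2.symm)
  have hdiag : ∀ e ∈ B, ¬ e.IsDiag := fun e he => G.not_isDiag_of_mem_edgeSet (hB e he).1
  calc #{v | vc v = c} + 2 * #B
      = ∑ v, ((if vc v = c then 1 else 0) + #{e ∈ B | v ∈ e}) := by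
        rw [sum_add_distrib, Sym2.sum_card_filter_mem_eq_two_mul_card hdiag, card_filter]
    _ ≤ ∑ _v : V, 1 := sum_le_sum fun v _ => hlocal v
    _ = Fintype.card V := by simp

theorem card_add_card_edgeFinset_le [DecidableEq V] [DecidableRel G.Adj]
    (h : IsTotalColoring G k vc ec) :
    Fintype.card V + #G.edgeFinset ≤ k * ((G.indepNum + Fintype.card V) / 2) := by
  have hclass : ∀ c, #{v | vc v = c} + #{e ∈ G.edgeFinset | ec e = c}
      ≤ (G.indepNum + Fintype.card V) / 2 := by
    intro c
    have := (h.isIndepSet_vertexClass c).card_le_indepNum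
    have := h.card_vertexClass_add_two_mul_card_edgeClass_le c
    omega
  calc Fintype.card V + #G.edgeFinset
      = ∑ c, (#{v | vc v = c} + #{e ∈ G.edgeFinset | ec e = c}) := by
        rw [sum_add_distrib, ← card_univ, card_eq_sum_card_fiberwise (fun v _ => mem_univ (vc v)),
          card_eq_sum_card_fiberwise (fun e _ => mem_univ (ec e))]
    _ ≤ ∑ _c : Fin k, (G.indepNum + Fintype.card V) / 2 := sum_le_sum fun c _ => hclass c
    _ = k * ((G.indepNum + Fintype.card V) / 2) := by simp

end IsTotalColoring

def circulantSevenVertexColoring : ZMod 7 → Fin 6 := ![0, 1, 0, 1, 2, 3, 2]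

/-- Entries at non-adjacent pairs are never read. -/
def circulantSevenEdgeColorMatrix : Fin 7 → Fin 7 → Fin 6 :=
  ![![0, 2, 0, 3, 1, 0, 4],
    ![2, 0, 3, 0, 0, 5, 0],
    ![0, 3, 0, 4, 0, 2, 5],
    ![3, 0, 4, 0, 5, 0, 0],
    ![1, 0, 0, 5, 0, 4, 0],
    ![0, 5, 2, 0, 4, 0, 1],
    ![4, 0, 5, 0, 0, 1, 0]]

theorem circulantSevenEdgeColorMatrix_comm (a b : Fin 7) :
    circulantSevenEdgeColorMatrix a b = circulantSevenEdgeColorMatrix b a := by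
  revert a b
  decide

def circulantSevenEdgeColoring : Sym2 (ZMod 7) → Fin 6 :=
  Sym2.lift ⟨circulantSevenEdgeColorMatrix, circulantSevenEdgeColorMatrix_comm⟩

theorem isTotalColoring_circulantGraph_seven :
    IsTotalColoring (circulantGraph 7) 6 circulantSevenVertexColoring
      circulantSevenEdgeColoring := by
  refine ⟨?_, ?_, ?_⟩ <;> decide

set_option maxRecDepth 10000 in
theorem card_le_two_of_isIndepSet_circulantGraph_seven {s : Finset (ZMod 7)}
    (hs : (circulantGraph 7).IsIndepSet s) : #s ≤ 2 := by
  revert s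
  decide

theorem indepNum_circulantGraph_seven_le : (circulantGraph 7).indepNum ≤ 2 := by
  obtain ⟨s, hs⟩ := (circulantGraph 7).exists_isNIndepSet_indepNum
  exact hs.card_eq ▸ card_le_two_of_isIndepSet_circulantGraph_seven hs.isIndepSet

theorem card_edgeFinset_circulantGraph_seven : #(circulantGraph 7).edgeFinset = 14 := by
  decide

theorem six_le_of_hasTotalColoring_circulantGraph_seven {k : ℕ}
    (h : HasTotalColoring (circulantGraph 7) k) : 6 ≤ k := by
  obtain ⟨vc, ec, h⟩ := h
  have hcount := h.card_add_card_edgeFinset_le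
  rw [ZMod.card, card_edgeFinset_circulantGraph_seven] at hcount
  have hclass : ((circulantGraph 7).indepNum + 7) / 2 ≤ 4 := by
    have := indepNum_circulantGraph_seven_le
    omega
  have := hcount.trans (Nat.mul_le_mul_left k hclass)
  omega

theorem total_chromatic_number_circulant_7 :
    totalChromaticNumber (circulantGraph 7) = 6 :=
  totalChromaticNumber_eq_of ⟨_, _, isTotalColoring_circulantGraph_seven⟩
    fun _ => six_le_of_hasTotalColoring_circulantGraph_seven
end

section
/- The maximum size of an independent set in the circulant graph C_17(1,3) is 7. -/
/-! An independent set `s` of `C_n(1,3)` is disjoint from its translate `s + 1`, so `2 |s| ≤ n`.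
For odd `n`, if `2 |s| = n - 1` then `s ∪ (s + 1)` misses exactly one vertex; but for `a ∈ s` with
`a + 2 ∉ s` both `a + 2` and `a + 3` are missed. So `s` is closed under adding `2`, a unit of
`ℤ/n`, which forces `s = ℤ/n`. Hence `|s| ≤ (n - 3) / 2`, and for `n = 17` the set
`{0, 2, …, 12}` attains `7`. -/

instance inst_s16 (n : ℕ) : DecidableRel (circulantGraph n).Adj := fun _ _ =>
  decidable_of_iff' _ (SimpleGraph.fromRel_adj _ _ _)

theorem ZMod.finset_eq_univ_of_add_mem {n : ℕ} [NeZero n] {s : Finset (ZMod n)} {u : ZMod n}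
    (hu : IsUnit u) (hs : s.Nonempty) (hadd : ∀ a ∈ s, a + u ∈ s) : s = Finset.univ := by
  obtain ⟨u, rfl⟩ := hu
  obtain ⟨a, ha⟩ := hs
  have hmul : ∀ k : ℕ, a + k * u ∈ s := by
    intro k
    induction k with
    | zero => simpa using ha
    | succ k ih => simpa [add_mul, ← add_assoc] using hadd _ ih
  refine Finset.eq_univ_of_forall fun y => ?_
  simpa [ZMod.natCast_zmod_val] using hmul ((y - a) * ↑u⁻¹).val

theorem ZMod.natCast_ne_zero_of_pos_of_lt {n k : ℕ} (hk : 0 < k) (hkn : k < n) :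
    (k : ZMod n) ≠ 0 := by
  rw [Ne, ZMod.natCast_eq_zero_iff]
  exact fun h => (Nat.le_of_dvd hk h).not_gt hkn

namespace circulantGraph

open Finset

variable {n : ℕ}

theorem adj_add_one (h1 : (1 : ZMod n) ≠ 0) (a : ZMod n) : (circulantGraph n).Adj a (a + 1) :=
  (SimpleGraph.fromRel_adj _ _ _).2 ⟨by simpa using h1, .inl (.inl (add_sub_cancel_left a 1))⟩

theorem adj_add_three (h3 : (3 : ZMod n) ≠ 0) (a : ZMod n) : (circulantGraph n).Adj a (a + 3) :=
  (SimpleGraph.fromRel_adj _ _ _).2 ⟨by simpa using h3, .inl (.inr (add_sub_cancel_left a 3))⟩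

variable {s : Finset (ZMod n)}

theorem disjoint_map_add_one (h1 : (1 : ZMod n) ≠ 0) (hs : (circulantGraph n).IsIndepSet s) :
    Disjoint s (s.map (addRightEmbedding 1)) := by
  refine disjoint_left.2 fun b hb hb' => ?_
  obtain ⟨a, ha, rfl⟩ := mem_map.1 hb'
  exact hs ha hb (adj_add_one h1 a).ne (adj_add_one h1 a)

theorem add_two_mem_of_card_compl_le_one [NeZero n] (h1 : (1 : ZMod n) ≠ 0)
    (h3 : (3 : ZMod n) ≠ 0) (hs : (circulantGraph n).IsIndepSet s)
    (hcompl : #(s ∪ s.map (addRightEmbedding 1))ᶜ ≤ 1) {a : ZMod n} (ha : a ∈ s) :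
    a + 2 ∈ s := by
  set t := s.map (addRightEmbedding 1)
  have mem_t (x : ZMod n) : x + 1 ∈ t ↔ x ∈ s := mem_map' (addRightEmbedding 1)
  by_contra h2
  have h2' : a + 2 ∉ s ∪ t := by
    rw [mem_union, show a + 2 = a + 1 + 1 by ring, mem_t]
    rintro (h | h)
    · exact h2 (by rwa [add_assoc, one_add_one_eq_two] at h)
    · exact hs ha h (adj_add_one h1 a).ne (adj_add_one h1 a)
  have h3' : a + 3 ∉ s ∪ t := by
    rw [mem_union, show a + 3 = a + 2 + 1 by ring, mem_t]
    rintro (h | h)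
    · rw [show a + 2 + 1 = a + 3 by ring] at h
      exact hs ha h (adj_add_three h3 a).ne (adj_add_three h3 a)
    · exact h2 h
  have hne : a + 2 ≠ a + 3 := by
    rw [Ne, show a + 3 = a + 2 + 1 by ring]
    simpa using h1
  exact hcompl.not_gt (one_lt_card.2 ⟨_, mem_compl.2 h2', _, mem_compl.2 h3', hne⟩)

theorem two_mul_card_add_three_le (hn : Odd n) (h3n : 3 < n)
    (hs : (circulantGraph n).IsIndepSet s) : 2 * #s + 3 ≤ n := by
  have : NeZero n := ⟨by omega⟩
  have h1 : (1 : ZMod n) ≠ 0 := by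
    exact_mod_cast ZMod.natCast_ne_zero_of_pos_of_lt one_pos (by omega)
  have h3 : (3 : ZMod n) ≠ 0 := by
    exact_mod_cast ZMod.natCast_ne_zero_of_pos_of_lt three_pos h3n
  have h2 : IsUnit (2 : ZMod n) := by
    exact_mod_cast (ZMod.isUnit_iff_coprime 2 n).2 (Nat.coprime_two_left.2 hn)
  set t := s.map (addRightEmbedding 1)
  have hunion : #(s ∪ t) = 2 * #s := by
    rw [card_union_of_disjoint (disjoint_map_add_one h1 hs), card_map, two_mul]
  have hle : 2 * #s ≤ n := by
    simpa [hunion] using card_le_univ (s ∪ t)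
  by_contra hlt
  obtain ⟨k, rfl⟩ := hn
  have hcompl : #(s ∪ t)ᶜ ≤ 1 := by
    rw [card_compl, ZMod.card, hunion]
    omega
  have huniv : s = univ := ZMod.finset_eq_univ_of_add_mem h2 (card_pos.1 (by omega))
    fun a ha => add_two_mem_of_card_compl_le_one h1 h3 hs hcompl ha
  rw [huniv, card_univ, ZMod.card] at hle
  omega

end circulantGraph

theorem circulant_17_max_independent_set :
    IsGreatest {k : ℕ | ∃ s : Finset (ZMod 17),
      (∀ v ∈ s, ∀ w ∈ s, ¬ (circulantGraph 17).Adj v w) ∧ s.card = k} 7 := by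
  refine ⟨⟨{0, 2, 4, 6, 8, 10, 12}, by decide, rfl⟩, ?_⟩
  rintro k ⟨s, hs, rfl⟩
  have := circulantGraph.two_mul_card_add_three_le (by decide) (by norm_num)
    (s := s) fun v hv w hw _ => hs v hv w hw
  omega
end
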